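/- Let V be a commutative quantale, X a V-category, and S_n the symmetric group on n letters. On multisets of size n of objects of X (equivalence classes of n-tuples under permutation), define M([x'₁,…,x'ₙ],[x₁,…,xₙ]) = ⋁_{σ ∈ Sₙ} ⋀ᵢ X(x'ᵢ, x_{σ(i)}). Then M is well-defined on equivalence classes and gives a V-category structure on size-n multisets of objects of X (the matching distance). -/

import Mathlib

/-! Permuting either tuple only reindexes the supremum over matchings (along `σ ↦ ρ σ π⁻¹`).
For transitivity, `⊗` distributes over both suprema, and a matching `σ` of `x` with `y`
followed by a matching `τ` of `y` with `z` gives the matching `τ σ` of `x` with `z`, along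
which `X(xᵢ, y_{σ i}) ⊗ X(y_{σ i}, z_{τ σ i}) ≤ X(xᵢ, z_{τ σ i})`. -/

section SupPreserving

variable {V : Type*} [CompleteLattice V] {t : V → V → V}

theorem mul_iSup_of_mul_sSup (hsup : ∀ (a : V) (S : Set V), t a (sSup S) = ⨆ s ∈ S, t a s)
    (a : V) {ι : Sort*} (f : ι → V) : t a (⨆ j, f j) = ⨆ j, t a (f j) := by
  rw [← sSup_range, hsup, iSup_range]

theorem monotone_of_mul_sSup (hsup : ∀ (a : V) (S : Set V), t a (sSup S) = ⨆ s ∈ S, t a s)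
    (a : V) : Monotone (t a) := by
  intro u v huv
  calc t a u ≤ ⨆ s ∈ ({u, v} : Set V), t a s := le_biSup (t a) (Set.mem_insert u {v})
    _ = t a v := by rw [← hsup, sSup_pair, sup_eq_right.mpr huv]

theorem mul_le_mul_of_mul_sSup (hcomm : ∀ a b, t a b = t b a)
    (hsup : ∀ (a : V) (S : Set V), t a (sSup S) = ⨆ s ∈ S, t a s)
    {a a' b b' : V} (ha : a ≤ a') (hb : b ≤ b') : t a b ≤ t a' b' :=
  calc t a b ≤ t a b' := monotone_of_mul_sSup hsup a hb
    _ = t b' a := hcomm a b'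
    _ ≤ t b' a' := monotone_of_mul_sSup hsup b' ha
    _ = t a' b' := hcomm b' a'

theorem iSup_mul_iSup_of_mul_sSup (hcomm : ∀ a b, t a b = t b a)
    (hsup : ∀ (a : V) (S : Set V), t a (sSup S) = ⨆ s ∈ S, t a s)
    {ι κ : Sort*} (f : ι → V) (g : κ → V) :
    t (⨆ i, f i) (⨆ j, g j) = ⨆ i, ⨆ j, t (f i) (g j) := by
  rw [hcomm, mul_iSup_of_mul_sSup hsup]
  refine iSup_congr fun j => ?_
  rw [hcomm, mul_iSup_of_mul_sSup hsup]

end SupPreserving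

section MatchingDist

variable {V X ι : Type*} [CompleteLattice V]

/-- On `Fin n`, the matching distance between the multisets underlying `x` and `y`. -/
def matchingDist (d : X → X → V) (x y : ι → X) : V :=
  ⨆ σ : Equiv.Perm ι, ⨅ i, d (x i) (y (σ i))

theorem matchingDist_comp_perm (d : X → X → V) (x y : ι → X) (π ρ : Equiv.Perm ι) :
    matchingDist d (x ∘ π) (y ∘ ρ) = matchingDist d x y := by
  have reindex : ∀ σ : Equiv.Perm ι,
      ⨅ i, d (x (π i)) (y (ρ (σ i))) = ⨅ i, d (x i) (y ((ρ * σ * π⁻¹) i)) := fun σ => by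
    rw [← π.iInf_comp (g := fun i => d (x i) (y ((ρ * σ * π⁻¹) i)))]
    simp only [Equiv.Perm.mul_apply, Equiv.Perm.coe_inv, Equiv.symm_apply_apply]
  simp only [matchingDist, Function.comp_apply, reindex]
  exact ((Equiv.mulLeft ρ).trans (Equiv.mulRight π⁻¹)).iSup_congr fun _ => rfl

theorem le_matchingDist_self {e : V} {d : X → X → V} (hrefl : ∀ x, e ≤ d x x) (x : ι → X) :
    e ≤ matchingDist d x x :=
  le_iSup_of_le 1 (le_iInf fun i => hrefl (x i))

theorem mul_iInf_le_iInf_comp {t : V → V → V} {d : X → X → V}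
    (hcomm : ∀ a b, t a b = t b a)
    (hsup : ∀ (a : V) (S : Set V), t a (sSup S) = ⨆ s ∈ S, t a s)
    (htrans : ∀ x y z, t (d x y) (d y z) ≤ d x z) (x y z : ι → X) (f g : ι → ι) :
    t (⨅ i, d (x i) (y (f i))) (⨅ i, d (y i) (z (g i))) ≤ ⨅ i, d (x i) (z (g (f i))) :=
  le_iInf fun i =>
    (mul_le_mul_of_mul_sSup hcomm hsup (iInf_le _ i) (iInf_le _ (f i))).trans (htrans _ _ _)

theorem matchingDist_trans {t : V → V → V} {d : X → X → V}
    (hcomm : ∀ a b, t a b = t b a)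
    (hsup : ∀ (a : V) (S : Set V), t a (sSup S) = ⨆ s ∈ S, t a s)
    (htrans : ∀ x y z, t (d x y) (d y z) ≤ d x z) (x y z : ι → X) :
    t (matchingDist d x y) (matchingDist d y z) ≤ matchingDist d x z := by
  rw [matchingDist, matchingDist, iSup_mul_iSup_of_mul_sSup hcomm hsup]
  exact iSup₂_le fun σ τ =>
    le_iSup_of_le (τ * σ) (mul_iInf_le_iInf_comp hcomm hsup htrans x y z σ τ)

end MatchingDist

theorem multiset_matching_distance_general {V X : Type*} (n : ℕ) [CompleteLattice V]
    (t : V → V → V) (e : V) (d : X → X → V)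
    (hcomm : ∀ a b, t a b = t b a)
    (hsup : ∀ (a : V) (S : Set V), t a (sSup S) = ⨆ s ∈ S, t a s)
    (hrefl : ∀ x, e ≤ d x x)
    (htrans : ∀ x y z, t (d x y) (d y z) ≤ d x z) :
    (∀ (x y : Fin n → X) (π ρ : Equiv.Perm (Fin n)),
        (⨆ σ : Equiv.Perm (Fin n), ⨅ i, d (x (π i)) (y (ρ (σ i)))) =
          ⨆ σ : Equiv.Perm (Fin n), ⨅ i, d (x i) (y (σ i))) ∧
    (∀ x : Fin n → X, e ≤ ⨆ σ : Equiv.Perm (Fin n), ⨅ i, d (x i) (x (σ i))) ∧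
    (∀ x y z : Fin n → X,
        t (⨆ σ : Equiv.Perm (Fin n), ⨅ i, d (x i) (y (σ i)))
          (⨆ σ : Equiv.Perm (Fin n), ⨅ i, d (y i) (z (σ i))) ≤
        ⨆ σ : Equiv.Perm (Fin n), ⨅ i, d (x i) (z (σ i))) :=
  ⟨matchingDist_comp_perm d, le_matchingDist_self hrefl,
    matchingDist_trans hcomm hsup htrans⟩

/-- the matching distance on multisets (size-n tuples up to permutation)
is well defined and a V-category structure. -/
theorem multiset_matching_distance {V X : Type*} (n : ℕ) [CompleteLattice V]
    (t : V → V → V) (e : V) (d : X → X → V)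
    (hcomm : ∀ a b, t a b = t b a)
    (hassoc : ∀ a b c, t (t a b) c = t a (t b c))
    (hunit : ∀ a, t e a = a)
    (hsup : ∀ (a : V) (S : Set V), t a (sSup S) = ⨆ s ∈ S, t a s)
    (hrefl : ∀ x, e ≤ d x x)
    (htrans : ∀ x y z, t (d x y) (d y z) ≤ d x z) :
    (∀ (x y : Fin n → X) (π ρ : Equiv.Perm (Fin n)),
        (⨆ σ : Equiv.Perm (Fin n), ⨅ i, d (x (π i)) (y (ρ (σ i)))) =
          ⨆ σ : Equiv.Perm (Fin n), ⨅ i, d (x i) (y (σ i))) ∧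
    (∀ x : Fin n → X, e ≤ ⨆ σ : Equiv.Perm (Fin n), ⨅ i, d (x i) (x (σ i))) ∧
    (∀ x y z : Fin n → X,
        t (⨆ σ : Equiv.Perm (Fin n), ⨅ i, d (x i) (y (σ i)))
          (⨆ σ : Equiv.Perm (Fin n), ⨅ i, d (y i) (z (σ i))) ≤
        ⨆ σ : Equiv.Perm (Fin n), ⨅ i, d (x i) (z (σ i))) :=
  multiset_matching_distance_general n t e d hcomm hsup hrefl htrans
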